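/- Let V* be the optimal value at the initial state of a finite-horizon MDP, and let V̄* be the optimal value of the 'clipped' MDP obtained by redirecting all transitions (h,s,a,s') outside a known set W* to an absorbing zero-reward state z. If for every optimal policy π* of the original MDP the probability of ever traversing a transition outside W* is at most ε, and rewards are in [0,1] with horizon H, then V̄* ≤ V* ≤ V̄* + H·ε. -/

import Mathlib

/-!
Write `occupancy π p s0 h` for the distribution of the state at step `h`; for stochastic `π`
and `p` the value is the sum over steps of the expected reward under this distribution.

`V̄* ≤ V*`: restrict an optimal clipped policy to the real states. By induction on `h`, its
clipped occupancy of every real state is at most the original one, since clipping only moves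
mass to `z`, where the reward is `0`.

`V* ≤ V̄* + H ε`: extend an optimal policy `π` of the original MDP to `z`. A trajectory that
never leaves `W` has the same probability and reward in both models; the others carry total
probability `leaveProb ≤ ε` and reward at most `H`.
-/

open Finset
open scoped Classical

/-- Probability of a trajectory in a finite-horizon MDP. -/
noncomputable def trajProb (H : ℕ) {S A : Type} [Fintype S] [Fintype A] [DecidableEq S]
    (π : ℕ → S → A → ℝ) (p : ℕ → S → A → S → ℝ) (s0 : S)
    (s : Fin (H + 1) → S) (a : Fin H → A) : ℝ :=
  (if s 0 = s0 then (1 : ℝ) else 0) *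
    ∏ h : Fin H, (π h (s h.castSucc) (a h) * p h (s h.castSucc) (a h) (s h.succ))

/-- Expected total reward of a policy. -/
noncomputable def value (H : ℕ) {S A : Type} [Fintype S] [Fintype A] [DecidableEq S]
    (π : ℕ → S → A → ℝ) (p : ℕ → S → A → S → ℝ) (s0 : S)
    (u : ℕ → S → A → ℝ) : ℝ :=
  ∑ s : Fin (H + 1) → S, ∑ a : Fin H → A,
    trajProb H π p s0 s a * ∑ h : Fin H, u h (s h.castSucc) (a h)

def IsPolicy {S A : Type} [Fintype A] (π : ℕ → S → A → ℝ) : Prop :=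
  ∀ h s, (∀ a, 0 ≤ π h s a) ∧ ∑ a, π h s a = 1

/-- The clipped transition model on `Option S` (`none` is the absorbing state `z`):
transitions in the known set `W` are kept, all remaining probability mass is redirected
to `z`, and `z` is absorbing. -/
noncomputable def clipP {S A : Type} [Fintype S]
    (P : ℕ → S → A → S → ℝ) (Wk : Set (ℕ × S × A × S)) :
    ℕ → Option S → A → Option S → ℝ :=
  fun h os a os' =>
    match os, os' with
    | some s, some s' => if (h, s, a, s') ∈ Wk then P h s a s' else 0
    | some s, none => ∑ s' : S, if (h, s, a, s') ∈ Wk then 0 else P h s a s'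
    | none, some _ => 0
    | none, none => 1

/-- The reward of the clipped MDP: as in the original MDP on real states, `0` at `z`. -/
noncomputable def clipR {S A : Type} (r : ℕ → S → A → ℝ) :
    ℕ → Option S → A → ℝ :=
  fun h os a => match os with
    | some s => r h s a
    | none => 0

/-- Probability, under policy `π` in the original MDP, that some step traverses a
transition `(h, s_h, a_h, s_{h+1})` outside the known set `W`. -/
noncomputable def leaveProb (H : ℕ) {S A : Type} [Fintype S] [Fintype A] [DecidableEq S]
    (π : ℕ → S → A → ℝ) (P : ℕ → S → A → S → ℝ) (s0 : S)
    (Wk : Set (ℕ × S × A × S)) : ℝ :=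
  ∑ s : Fin (H + 1) → S, ∑ a : Fin H → A,
    trajProb H π P s0 s a *
      (if ∃ h : Fin H, (h.1, s h.castSucc, a h, s h.succ) ∉ Wk then 1 else 0)

theorem Function.Injective.sum_comp_le_sum {ι κ M : Type*} [Fintype ι] [Fintype κ]
    [AddCommMonoid M] [Preorder M] [AddLeftMono M] {e : ι → κ} (he : e.Injective) {f : κ → M}
    (hf : ∀ k, 0 ≤ f k) : ∑ i, f (e i) ≤ ∑ k, f k :=
  (Finset.sum_map univ ⟨e, he⟩ f).symm.trans_le (Finset.sum_le_univ_sum_of_nonneg hf)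

theorem sum_fun_fin_succ_eq_sum_snoc {β M : Type*} [Fintype β] [AddCommMonoid M] {n : ℕ}
    (G : (Fin (n + 1) → β) → M) :
    ∑ f, G f = ∑ f : Fin n → β, ∑ x, G (Fin.snoc f x) := by
  rw [← (Fin.snocEquiv fun _ => β).sum_comp, Fintype.sum_prod_type, Finset.sum_comm]
  rfl

section Trajectories

variable {S A : Type} [Fintype S] [Fintype A] [DecidableEq S]
  (π : ℕ → S → A → ℝ) (p : ℕ → S → A → S → ℝ) (s0 : S)

noncomputable def occupancy : ℕ → S → ℝ
  | 0, x => if x = s0 then 1 else 0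
  | h + 1, x' => ∑ x, occupancy h x * ∑ a, π h x a * p h x a x'

theorem trajProb_snoc (H : ℕ) (s : Fin (H + 1) → S) (x : S) (a : Fin H → A) (b : A) :
    trajProb (H + 1) π p s0 (Fin.snoc s x) (Fin.snoc a b) =
      trajProb H π p s0 s a * (π H (s (Fin.last H)) b * p H (s (Fin.last H)) b x) := by
  have h0 : (Fin.snoc s x : Fin (H + 2) → S) 0 = s 0 := Fin.snoc_castSucc (i := 0) ..
  simp only [trajProb, Fin.prod_univ_castSucc, Fin.succ_castSucc, Fin.snoc_castSucc,
    Fin.val_castSucc, Fin.succ_last, Fin.snoc_last, Fin.val_last, h0]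
  ring

theorem sum_trajProb_succ (H : ℕ) (F : (Fin (H + 2) → S) → (Fin (H + 1) → A) → ℝ) :
    ∑ s, ∑ a, trajProb (H + 1) π p s0 s a * F s a =
      ∑ s : Fin (H + 1) → S, ∑ a : Fin H → A, trajProb H π p s0 s a *
        ∑ b, π H (s (Fin.last H)) b *
          ∑ x, p H (s (Fin.last H)) b x * F (Fin.snoc s x) (Fin.snoc a b) := by
  rw [sum_fun_fin_succ_eq_sum_snoc]
  refine Finset.sum_congr rfl fun s _ => ?_
  simp_rw [sum_fun_fin_succ_eq_sum_snoc (n := H), Finset.mul_sum, trajProb_snoc]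
  rw [Finset.sum_comm]
  refine Finset.sum_congr rfl fun a _ => ?_
  rw [Finset.sum_comm]
  simp only [mul_assoc]

theorem sum_trajProb_mul_last (H : ℕ) (g : S → ℝ) :
    ∑ s : Fin (H + 1) → S, ∑ a : Fin H → A, trajProb H π p s0 s a * g (s (Fin.last H)) =
      ∑ x, occupancy π p s0 H x * g x := by
  induction H generalizing g with
  | zero =>
    rw [← (Equiv.funUnique (Fin 1) S).symm.sum_comp]
    simp [trajProb, occupancy, Equiv.funUnique, eq_comm]
  | succ H ih =>
    simp only [sum_trajProb_succ, Fin.snoc_last]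
    rw [ih fun y => ∑ b, π H y b * ∑ x, p H y b x * g x]
    simp only [occupancy, Finset.mul_sum, Finset.sum_mul]
    rw [eq_comm, Finset.sum_comm]
    refine Finset.sum_congr rfl fun y _ => ?_
    rw [Finset.sum_comm]
    refine Finset.sum_congr rfl fun b _ => Finset.sum_congr rfl fun x _ => ?_
    ring

theorem sum_trajProb_succ_mul_init (hπ : ∀ h s, ∑ a, π h s a = 1)
    (hp : ∀ h s a, ∑ s', p h s a s' = 1) (H : ℕ) (F : (Fin (H + 1) → S) → (Fin H → A) → ℝ) :
    ∑ s, ∑ a, trajProb (H + 1) π p s0 s a * F (Fin.init s) (Fin.init a) =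
      ∑ s, ∑ a, trajProb H π p s0 s a * F s a := by
  simp only [sum_trajProb_succ, Fin.init_snoc, ← Finset.sum_mul, hp, one_mul, hπ]

theorem sum_trajProb_mul_apply (hπ : ∀ h s, ∑ a, π h s a = 1)
    (hp : ∀ h s a, ∑ s', p h s a s' = 1) (u : S → A → ℝ) {h H : ℕ} (hh : h < H) :
    ∑ s : Fin (H + 1) → S, ∑ a : Fin H → A,
        trajProb H π p s0 s a * u (s ⟨h, Nat.lt_succ_of_lt hh⟩) (a ⟨h, hh⟩) =
      ∑ x, occupancy π p s0 h x * ∑ b, π h x b * u x b := by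
  induction H, hh using Nat.le_induction with
  | base =>
    have last_state (s : Fin (h + 1) → S) (x : S) :
        (Fin.snoc s x : Fin (h + 2) → S) ⟨h, by omega⟩ =
          s (Fin.last h) :=
      Fin.snoc_castSucc (α := fun _ => S) (i := Fin.last h) ..
    have last_action (a : Fin h → A) (b : A) :
        (Fin.snoc a b : Fin (h + 1) → A) ⟨h, by omega⟩ = b :=
      Fin.snoc_last ..
    have sum_p_mul (y : S) (b : A) (c : ℝ) : ∑ x, p h y b x * c = c := by
      rw [← Finset.sum_mul, hp, one_mul]
    simp only [sum_trajProb_succ, last_state, last_action, sum_p_mul]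
    exact sum_trajProb_mul_last π p s0 h fun y => ∑ b, π h y b * u y b
  | succ H hH ih =>
    exact (sum_trajProb_succ_mul_init π p s0 hπ hp H
      fun s a => u (s ⟨h, Nat.lt_succ_of_lt hH⟩) (a ⟨h, hH⟩)).trans ih

theorem value_eq_sum_occupancy (hπ : ∀ h s, ∑ a, π h s a = 1)
    (hp : ∀ h s a, ∑ s', p h s a s' = 1) (H : ℕ) (u : ℕ → S → A → ℝ) :
    value H π p s0 u = ∑ h : Fin H, ∑ x, occupancy π p s0 h x * ∑ a, π h x a * u h x a := by
  simp only [value, Finset.mul_sum]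
  rw [Finset.sum_congr rfl fun s _ => Finset.sum_comm, Finset.sum_comm]
  refine Finset.sum_congr rfl fun i _ => ?_
  simp only [← Finset.mul_sum]
  exact sum_trajProb_mul_apply π p s0 hπ hp (u i) i.2

theorem trajProb_nonneg (hπ : ∀ h s a, 0 ≤ π h s a) (hp : ∀ h s a s', 0 ≤ p h s a s') (H : ℕ)
    (s : Fin (H + 1) → S) (a : Fin H → A) : 0 ≤ trajProb H π p s0 s a :=
  mul_nonneg (by positivity) (Finset.prod_nonneg fun h _ => mul_nonneg (hπ ..) (hp ..))

theorem occupancy_nonneg (hπ : ∀ h s a, 0 ≤ π h s a) (hp : ∀ h s a s', 0 ≤ p h s a s') :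
    ∀ h x, 0 ≤ occupancy π p s0 h x
  | 0, x => by simp only [occupancy]; positivity
  | h + 1, x => Finset.sum_nonneg fun y _ => mul_nonneg (occupancy_nonneg hπ hp h y)
      (Finset.sum_nonneg fun a _ => mul_nonneg (hπ ..) (hp ..))

end Trajectories

theorem sum_trajProb_comp_le_value {S S' A : Type} [Fintype S] [Fintype S'] [Fintype A]
    [DecidableEq S'] {e : S → S'} (he : e.Injective) (π : ℕ → S' → A → ℝ)
    (p : ℕ → S' → A → S' → ℝ) (s0 : S') (u : ℕ → S' → A → ℝ) (hπ : ∀ h s a, 0 ≤ π h s a)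
    (hp : ∀ h s a s', 0 ≤ p h s a s') (hu : ∀ h s a, 0 ≤ u h s a) (H : ℕ) :
    ∑ s : Fin (H + 1) → S, ∑ a : Fin H → A,
        trajProb H π p s0 (e ∘ s) a * ∑ h : Fin H, u h (e (s h.castSucc)) (a h) ≤
      value H π p s0 u :=
  he.comp_left.sum_comp_le_sum
    (f := fun s => ∑ a, trajProb H π p s0 s a * ∑ h : Fin H, u h (s h.castSucc) (a h))
    fun _ => Finset.sum_nonneg fun _ _ => mul_nonneg (trajProb_nonneg π p s0 hπ hp ..)
      (Finset.sum_nonneg fun _ _ => hu ..)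

section Clipping

variable {S A : Type} [Fintype S] (P : ℕ → S → A → S → ℝ) (W : Set (ℕ × S × A × S))

theorem clipP_nonneg (hP : ∀ h s a s', 0 ≤ P h s a s') :
    ∀ h os a os', 0 ≤ clipP P W h os a os'
  | h, some s, a, some s' => by simp only [clipP]; split_ifs <;> simp [hP]
  | h, some s, a, none => Finset.sum_nonneg fun s' _ => by split_ifs <;> simp [hP]
  | _, none, _, some _ => le_rfl
  | _, none, _, none => zero_le_one

theorem sum_clipP (hP : ∀ h s a, ∑ s', P h s a s' = 1) (h : ℕ) (os : Option S) (a : A) :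
    ∑ os', clipP P W h os a os' = 1 := by
  rw [Fintype.sum_option]
  cases os with
  | none => simp [clipP]
  | some s =>
    simp only [clipP, ← Finset.sum_add_distrib]
    rw [← hP h s a]
    exact Finset.sum_congr rfl fun s' _ => by split_ifs <;> simp

theorem clipP_some_le (hP : ∀ h s a s', 0 ≤ P h s a s') (h : ℕ) (s : S) (a : A) (s' : S) :
    clipP P W h (some s) a (some s') ≤ P h s a s' := by
  simp only [clipP]; split_ifs <;> simp [hP]

variable [Fintype A] [DecidableEq S]

theorem occupancy_clipP_le (π : ℕ → Option S → A → ℝ) (s0 : S) (hπ : ∀ h os a, 0 ≤ π h os a)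
    (hP : ∀ h s a s', 0 ≤ P h s a s') :
    ∀ h x, occupancy π (clipP P W) (some s0) h (some x) ≤
      occupancy (fun h x a => π h (some x) a) P s0 h x
  | 0, x => by simp [occupancy]
  | h + 1, x => by
    have absorbed (b : A) : clipP P W h none b (some x) = 0 := rfl
    simp only [occupancy, Fintype.sum_option, absorbed, mul_zero, Finset.sum_const_zero,
      zero_add]
    refine Finset.sum_le_sum fun y _ => mul_le_mul (occupancy_clipP_le π s0 hπ hP h y)
      (Finset.sum_le_sum fun b _ => mul_le_mul_of_nonneg_left (clipP_some_le P W hP ..) (hπ ..))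
      (Finset.sum_nonneg fun b _ => mul_nonneg (hπ ..) (clipP_nonneg P W hP ..))
      (occupancy_nonneg _ P s0 (fun _ _ _ => hπ ..) hP h y)

theorem value_clipP_le_value (hP_nonneg : ∀ h s a s', 0 ≤ P h s a s')
    (hP_sum : ∀ h s a, ∑ s', P h s a s' = 1) (π : ℕ → Option S → A → ℝ) (hπ : IsPolicy π)
    (r : ℕ → S → A → ℝ) (hr : ∀ h s a, 0 ≤ r h s a) (H : ℕ) (s0 : S) :
    value H π (clipP P W) (some s0) (clipR r) ≤ value H (fun h x a => π h (some x) a) P s0 r := by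
  rw [value_eq_sum_occupancy _ _ _ (fun h os => (hπ h os).2) (sum_clipP P W hP_sum),
    value_eq_sum_occupancy _ _ _ (fun h x => (hπ h (some x)).2) hP_sum]
  refine Finset.sum_le_sum fun h _ => ?_
  simp only [Fintype.sum_option, clipR, mul_zero, Finset.sum_const_zero, zero_add]
  exact Finset.sum_le_sum fun x _ => mul_le_mul_of_nonneg_right
    (occupancy_clipP_le P W π s0 (fun h os a => (hπ h os).1 a) hP_nonneg h x)
    (Finset.sum_nonneg fun a _ => mul_nonneg ((hπ ..).1 a) (hr ..))

theorem trajProb_clipP_comp_some (π : ℕ → Option S → A → ℝ) (s0 : S) (H : ℕ)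
    (s : Fin (H + 1) → S) (a : Fin H → A) :
    trajProb H π (clipP P W) (some s0) (some ∘ s) a =
      if ∃ h : Fin H, (h.1, s h.castSucc, a h, s h.succ) ∉ W then 0
      else trajProb H (fun h x b => π h (some x) b) P s0 s a := by
  split_ifs with hleave
  · obtain ⟨h, hh⟩ := hleave
    exact mul_eq_zero_of_right _ (Finset.prod_eq_zero (mem_univ h) (by simp [clipP, hh]))
  · simp only [not_exists, not_not] at hleave
    simp [trajProb, clipP, hleave]

theorem value_le_value_clipP_add_mul_leaveProb (hP : ∀ h s a s', 0 ≤ P h s a s')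
    (π : ℕ → Option S → A → ℝ) (hπ : ∀ h os a, 0 ≤ π h os a) (r : ℕ → S → A → ℝ)
    (hr : ∀ h s a, r h s a ∈ Set.Icc (0 : ℝ) 1) (H : ℕ) (s0 : S) :
    value H (fun h x a => π h (some x) a) P s0 r ≤
      value H π (clipP P W) (some s0) (clipR r) +
        H * leaveProb H (fun h x a => π h (some x) a) P s0 W := by
  set π' : ℕ → S → A → ℝ := fun h x a => π h (some x) a
  have hπ' (h : ℕ) (x : S) (a : A) : 0 ≤ π' h x a := hπ ..
  have per_trajectory (s : Fin (H + 1) → S) (a : Fin H → A) :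
      trajProb H π' P s0 s a * ∑ h : Fin H, r h (s h.castSucc) (a h) ≤
        trajProb H π (clipP P W) (some s0) (some ∘ s) a *
            (∑ h : Fin H, clipR r h (some (s h.castSucc)) (a h)) +
          H * (trajProb H π' P s0 s a *
            if ∃ h : Fin H, (h.1, s h.castSucc, a h, s h.succ) ∉ W then 1 else 0) := by
    rw [trajProb_clipP_comp_some]
    split_ifs
    · have reward_le : ∑ h : Fin H, r h (s h.castSucc) (a h) ≤ H :=
        (Finset.sum_le_sum fun h _ => (hr ..).2).trans_eq (by simp)
      rw [zero_mul, zero_add, mul_one, mul_comm (H : ℝ)]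
      exact mul_le_mul_of_nonneg_left reward_le (trajProb_nonneg π' P s0 hπ' hP ..)
    · simp only [add_zero, mul_zero]
      rfl
  calc value H π' P s0 r
      ≤ (∑ s : Fin (H + 1) → S, ∑ a : Fin H → A,
          trajProb H π (clipP P W) (some s0) (some ∘ s) a *
            ∑ h : Fin H, clipR r h (some (s h.castSucc)) (a h)) +
        H * leaveProb H π' P s0 W := by
        rw [value, leaveProb, Finset.mul_sum, ← Finset.sum_add_distrib]
        refine Finset.sum_le_sum fun s _ => ?_
        rw [Finset.mul_sum, ← Finset.sum_add_distrib]
        exact Finset.sum_le_sum fun a _ => per_trajectory s a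
    _ ≤ _ := add_le_add (sum_trajProb_comp_le_value (Option.some_injective S) π _ _ _ hπ
        (clipP_nonneg P W hP) (fun h os a => by cases os <;> simp [clipR, (hr ..).1]) H) le_rfl

end Clipping

theorem stmt13_general {S A : Type} [Fintype S] [Fintype A] [DecidableEq S]
    (H : ℕ) (P : ℕ → S → A → S → ℝ)
    (hP : ∀ h s a, (∀ s', 0 ≤ P h s a s') ∧ ∑ s', P h s a s' = 1)
    (r : ℕ → S → A → ℝ) (hr : ∀ h s a, r h s a ∈ Set.Icc (0 : ℝ) 1)
    (s0 : S) (Wk : Set (ℕ × S × A × S)) (ε : ℝ)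
    (Vstar Vbar : ℝ)
    (hVstar : IsGreatest {v : ℝ | ∃ π, IsPolicy π ∧ v = value H π P s0 r} Vstar)
    (hVbar : IsGreatest {v : ℝ | ∃ π : ℕ → Option S → A → ℝ, IsPolicy π ∧
        v = value H π (clipP P Wk) (some s0) (clipR r)} Vbar)
    (hopt : ∀ π, IsPolicy π → value H π P s0 r = Vstar →
        leaveProb H π P s0 Wk ≤ ε) :
    Vbar ≤ Vstar ∧ Vstar ≤ Vbar + H * ε := by
  have hP_nonneg h s a := (hP h s a).1
  have hP_sum h s a := (hP h s a).2
  obtain ⟨πc, hπc, hVπc⟩ := hVbar.1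
  obtain ⟨π, hπ, hVπ⟩ := hVstar.1
  constructor
  · calc Vbar = value H πc (clipP P Wk) (some s0) (clipR r) := hVπc
      _ ≤ value H (fun h x a => πc h (some x) a) P s0 r :=
        value_clipP_le_value P Wk hP_nonneg hP_sum πc hπc r (fun h s a => (hr h s a).1) H s0
      _ ≤ Vstar := hVstar.2 ⟨_, fun h x => hπc h (some x), rfl⟩
  · set πc' : ℕ → Option S → A → ℝ := fun h os a => π h (os.getD s0) a
    calc Vstar = value H π P s0 r := hVπ
      _ ≤ value H πc' (clipP P Wk) (some s0) (clipR r) + H * leaveProb H π P s0 Wk :=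
        value_le_value_clipP_add_mul_leaveProb P Wk hP_nonneg πc' (fun h os => (hπ h _).1) r hr H s0
      _ ≤ Vbar + H * ε := by
        gcongr
        · exact hVbar.2 ⟨πc', fun h os => hπ h _, rfl⟩
        · exact hopt π hπ hVπ.symm

/-- **Clipping the infrequent transitions loses at most `H·ε` of optimal value.**
Let `V*` be the optimal value of the original MDP and `V̄*` the optimal value of the
clipped MDP. If every optimal policy of the original MDP leaves the known set `W` with
probability at most `ε`, rewards lie in `[0,1]`, then `V̄* ≤ V* ≤ V̄* + H·ε`. -/
theorem stmt13 {S A : Type} [Fintype S] [Fintype A] [DecidableEq S] [DecidableEq A]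
    (H : ℕ) (P : ℕ → S → A → S → ℝ)
    (hP : ∀ h s a, (∀ s', 0 ≤ P h s a s') ∧ ∑ s', P h s a s' = 1)
    (r : ℕ → S → A → ℝ) (hr : ∀ h s a, r h s a ∈ Set.Icc (0 : ℝ) 1)
    (s0 : S) (Wk : Set (ℕ × S × A × S)) (ε : ℝ) (hε : 0 ≤ ε)
    (Vstar Vbar : ℝ)
    (hVstar : IsGreatest {v : ℝ | ∃ π, IsPolicy π ∧ v = value H π P s0 r} Vstar)
    (hVbar : IsGreatest {v : ℝ | ∃ π : ℕ → Option S → A → ℝ, IsPolicy π ∧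
        v = value H π (clipP P Wk) (some s0) (clipR r)} Vbar)
    (hopt : ∀ π, IsPolicy π → value H π P s0 r = Vstar →
        leaveProb H π P s0 Wk ≤ ε) :
    Vbar ≤ Vstar ∧ Vstar ≤ Vbar + H * ε :=
  stmt13_general H P hP r hr s0 Wk ε Vstar Vbar hVstar hVbar hopt
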